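/- arXiv:1110.3361 — 5 statements merged into one kernel-verified Lean document; each statement's English description precedes it below -/
import Mathlib

section
/- Let E_n be the event that some path has weight at most (length)/e − log n, i.e. E_n = ⋃_{ℓ=1}^{n} ⋃_{γ ∈ Γ_ℓ} { X(γ) ≤ e^{−1}·ℓ − log n }. Then P(E_n) → 0 as n → ∞. -/
/-! Union bound over the at most `n^(ℓ+1)` paths of each length `ℓ ≤ n`. The weight of a fixed
path is a sum of `ℓ` independent exponentials of rate `r = 1/n`, and `E[e^{-sX}] = r/(r+s)`, so the
Chernoff bound with `s = e` gives
`P(X(γ) ≤ ℓ/e - log n) ≤ e^{ℓ - e log n} (ne)^{-ℓ} = n^{-e-ℓ}`.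
Hence `P(E_n) ≤ n · n^{ℓ+1} · n^{-e-ℓ} = n^{2-e}`, which tends to `0` because `e > 2`. -/

open MeasureTheory ProbabilityTheory Filter Finset

namespace Paper

/-- A path of length `ℓ` in the complete graph on `Fin n`: a sequence of `ℓ+1` distinct
vertices. -/
abbrev Path (n ℓ : ℕ) := {v : Fin (ℓ + 1) → Fin n // Function.Injective v}

/-- The `i`-th edge of a path. -/
def Path.edge {n ℓ : ℕ} (γ : Path n ℓ) (i : Fin ℓ) : Sym2 (Fin n) :=
  s(γ.1 i.castSucc, γ.1 i.succ)

/-- The total weight `X(γ)` of a path. -/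
noncomputable def weight {n ℓ : ℕ} (ω : Sym2 (Fin n) → ℝ) (γ : Path n ℓ) : ℝ :=
  ∑ i : Fin ℓ, ω (γ.edge i)

/-- Partial sum of the first `k` edge weights of a path. -/
noncomputable def partialSum {n ℓ : ℕ} (ω : Sym2 (Fin n) → ℝ) (γ : Path n ℓ) (k : ℕ) : ℝ :=
  ∑ i : Fin ℓ, if (i : ℕ) < k then ω (γ.edge i) else 0

/-- The deviation `M(γ) = max_{1 ≤ k ≤ ℓ} |∑_{i=1}^k X_{e_i} - (k/ℓ) X(γ)|`. -/
noncomputable def deviation {n ℓ : ℕ} (ω : Sym2 (Fin n) → ℝ) (γ : Path n ℓ) : ℝ :=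
  ⨆ k : Fin ℓ, |partialSum ω γ ((k : ℕ) + 1) - (((k : ℕ) + 1 : ℝ) / ℓ) * weight ω γ|

/-- The law of the i.i.d. edge weights: each edge carries an exponential variable with
mean `n` (rate `1/n`). -/
noncomputable def P (n : ℕ) : Measure (Sym2 (Fin n) → ℝ) :=
  Measure.pi fun _ => expMeasure ((n : ℝ)⁻¹)

/-- `L n λ ω` : the maximal `ℓ` such that some path of length `ℓ` has weight at most `λℓ`
(`0` if there is none). -/
noncomputable def L (n : ℕ) (lam : ℝ) (ω : Sym2 (Fin n) → ℝ) : ℕ :=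
  sSup {ℓ : ℕ | ∃ γ : Path n ℓ, weight ω γ ≤ lam * ℓ}

open scoped ENNReal

section Chernoff

variable {ι : Type*} [Fintype ι]

lemma lintegral_exp_neg_mul_expMeasure {r s : ℝ} (hr : 0 < r) (hs : 0 ≤ s) :
    ∫⁻ x, ENNReal.ofReal (Real.exp (-(s * x))) ∂expMeasure r = ENNReal.ofReal (r / (r + s)) := by
  have hrs : 0 < r + s := by linarith
  have h_density : ∀ x, exponentialPDF r x * ENNReal.ofReal (Real.exp (-(s * x)))
      = ENNReal.ofReal (r / (r + s)) * exponentialPDF (r + s) x := by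
    intro x
    rcases le_or_gt 0 x with hx | hx
    · rw [exponentialPDF_of_nonneg hx, exponentialPDF_of_nonneg hx,
        ← ENNReal.ofReal_mul (by positivity), ← ENNReal.ofReal_mul (by positivity)]
      congr 1
      rw [mul_assoc, ← Real.exp_add, show -(r * x) + -(s * x) = -((r + s) * x) by ring]
      field_simp
    · simp [exponentialPDF_of_neg hx]
  rw [show expMeasure r = volume.withDensity (exponentialPDF r) from rfl,
    lintegral_withDensity_eq_lintegral_mul _
      (show Measurable (exponentialPDF r) from (measurable_exponentialPDFReal r).ennreal_ofReal)
      (by fun_prop)]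
  simp only [Pi.mul_apply, h_density]
  rw [lintegral_const_mul _ (show Measurable (exponentialPDF (r + s)) from
      (measurable_exponentialPDFReal _).ennreal_ofReal),
    lintegral_exponentialPDF_eq_one hrs, mul_one]

lemma lintegral_prod_apply_pi_eq_pow {Ω : Type*} [MeasurableSpace Ω] (μ : Measure Ω)
    [IsProbabilityMeasure μ] (T : Finset ι) {f : Ω → ℝ≥0∞} (hf : Measurable f) :
    ∫⁻ ω, ∏ i ∈ T, f (ω i) ∂Measure.pi (fun _ => μ) = (∫⁻ x, f x ∂μ) ^ T.card := by
  rw [lintegral_prod_eq_prod_lintegral_of_indepFun T _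
      (iIndepFun_pi (X := fun _ => f) fun _ => hf.aemeasurable)
      fun i => hf.comp (measurable_pi_apply i)]
  simp_rw [(measurePreserving_eval (fun _ => μ) _).lintegral_comp hf]
  exact Finset.prod_const _

lemma pi_expMeasure_sum_le_le_exp_mul {r s : ℝ} (hr : 0 < r) (hs : 0 ≤ s) (T : Finset ι) (t : ℝ) :
    Measure.pi (fun _ : ι => expMeasure r) {ω | ∑ i ∈ T, ω i ≤ t}
      ≤ ENNReal.ofReal (Real.exp (s * t)) * ENNReal.ofReal (r / (r + s)) ^ T.card := by
  have := isProbabilityMeasure_expMeasure hr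
  set F : (ι → ℝ) → ℝ≥0∞ := fun ω =>
    ENNReal.ofReal (Real.exp (s * t)) * ∏ i ∈ T, ENNReal.ofReal (Real.exp (-(s * ω i)))
  have hF_eq : ∀ ω, F ω = ENNReal.ofReal (Real.exp (s * (t - ∑ i ∈ T, ω i))) := by
    intro ω
    simp only [F]
    rw [← ENNReal.ofReal_prod_of_nonneg fun i _ => (Real.exp_pos _).le, ← Real.exp_sum,
      ← ENNReal.ofReal_mul (Real.exp_pos _).le, ← Real.exp_add, Finset.sum_neg_distrib,
      ← Finset.mul_sum, mul_sub, sub_eq_add_neg]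
  have h_one_le : {ω : ι → ℝ | ∑ i ∈ T, ω i ≤ t} ⊆ {ω | 1 ≤ F ω} := by
    intro ω hω
    rw [Set.mem_ofPred_eq, hF_eq, ← ENNReal.ofReal_one]
    exact ENNReal.ofReal_le_ofReal
      (Real.one_le_exp (mul_nonneg hs (sub_nonneg.mpr hω)))
  have hF_meas : Measurable F := by fun_prop
  calc _ ≤ Measure.pi (fun _ : ι => expMeasure r) {ω | 1 ≤ F ω} := measure_mono h_one_le
    _ ≤ ∫⁻ ω, F ω ∂Measure.pi (fun _ : ι => expMeasure r) := by
      simpa using mul_meas_ge_le_lintegral₀ hF_meas.aemeasurable 1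
    _ = _ := by
      rw [lintegral_const_mul _ (by fun_prop), lintegral_prod_apply_pi_eq_pow _ T
          (f := fun x => ENNReal.ofReal (Real.exp (-(s * x)))) (by fun_prop),
        lintegral_exp_neg_mul_expMeasure hr hs]

end Chernoff

lemma Path.edge_injective {n ℓ : ℕ} (γ : Path n ℓ) : Function.Injective γ.edge := by
  intro i j h
  rcases Sym2.eq_iff.mp h with ⟨h₁, -⟩ | ⟨h₁, h₂⟩
  · exact Fin.castSucc_injective _ (γ.2 h₁)
  · have h₁ := congrArg Fin.val (γ.2 h₁)
    have h₂ := congrArg Fin.val (γ.2 h₂)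
    simp only [Fin.val_castSucc, Fin.val_succ] at h₁ h₂
    omega

lemma Path.card_le (n ℓ : ℕ) : Fintype.card (Path n ℓ) ≤ n ^ (ℓ + 1) :=
  (Fintype.card_subtype_le _).trans_eq (by simp)

lemma weight_eq_sum_image {n ℓ : ℕ} (ω : Sym2 (Fin n) → ℝ) (γ : Path n ℓ) :
    weight ω γ = ∑ e ∈ Finset.univ.image γ.edge, ω e :=
  (Finset.sum_image fun _ _ _ _ h => γ.edge_injective h).symm

lemma P_weight_le_le_rpow {n ℓ : ℕ} (hn : 0 < n) (γ : Path n ℓ) :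
    P n {ω | weight ω γ ≤ Real.exp (-1) * ℓ - Real.log n}
      ≤ ENNReal.ofReal ((n : ℝ) ^ (-Real.exp 1) / (n : ℝ) ^ ℓ) := by
  have hn' : (0 : ℝ) < n := by exact_mod_cast hn
  have hr : (0 : ℝ) < (n : ℝ)⁻¹ := inv_pos.mpr hn'
  have h_card : (Finset.univ.image γ.edge).card = ℓ := by
    rw [Finset.card_image_of_injective _ γ.edge_injective, Finset.card_univ, Fintype.card_fin]
  simp_rw [weight_eq_sum_image]
  refine (pi_expMeasure_sum_le_le_exp_mul hr (Real.exp_pos 1).le _ _).trans ?_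
  rw [h_card, ← ENNReal.ofReal_pow (by positivity), ← ENNReal.ofReal_mul (by positivity)]
  refine ENNReal.ofReal_le_ofReal ?_
  have h_tilt : Real.exp (Real.exp 1 * (Real.exp (-1) * ℓ - Real.log n))
      = Real.exp ℓ * (n : ℝ) ^ (-Real.exp 1) := by
    rw [Real.rpow_def_of_pos hn', ← Real.exp_add, Real.exp_neg]
    congr 1
    field_simp
    ring
  calc _ ≤ Real.exp ℓ * (n : ℝ) ^ (-Real.exp 1) * ((n : ℝ)⁻¹ / Real.exp 1) ^ ℓ := by
        rw [h_tilt]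
        gcongr
        linarith
    _ = _ := by
        rw [div_pow, Real.exp_one_pow, inv_pow]
        field_simp

lemma P_exists_light_path_le {n : ℕ} (hn : 0 < n) :
    P n {ω | ∃ ℓ : ℕ, 1 ≤ ℓ ∧ ℓ ≤ n ∧ ∃ γ : Path n ℓ,
        weight ω γ ≤ Real.exp (-1) * ℓ - Real.log n}
      ≤ ENNReal.ofReal ((n : ℝ) ^ (2 - Real.exp 1)) := by
  have hn' : (0 : ℝ) < n := by exact_mod_cast hn
  have h_union : {ω | ∃ ℓ : ℕ, 1 ≤ ℓ ∧ ℓ ≤ n ∧ ∃ γ : Path n ℓ,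
      weight ω γ ≤ Real.exp (-1) * ℓ - Real.log n}
      = ⋃ ℓ ∈ Finset.Icc 1 n, ⋃ γ : Path n ℓ,
          {ω | weight ω γ ≤ Real.exp (-1) * ℓ - Real.log n} := by
    ext ω
    simp [and_assoc]
  have h_length : ∀ ℓ, ∑ γ : Path n ℓ, ENNReal.ofReal ((n : ℝ) ^ (-Real.exp 1) / (n : ℝ) ^ ℓ)
      ≤ ENNReal.ofReal ((n : ℝ) ^ (1 - Real.exp 1)) := by
    intro ℓ
    rw [Finset.sum_const, Finset.card_univ, nsmul_eq_mul, ← ENNReal.ofReal_natCast,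
      ← ENNReal.ofReal_mul (by positivity)]
    refine ENNReal.ofReal_le_ofReal ?_
    calc _ ≤ ((n ^ (ℓ + 1) : ℕ) : ℝ) * ((n : ℝ) ^ (-Real.exp 1) / (n : ℝ) ^ ℓ) := by
          gcongr
          exact_mod_cast Path.card_le n ℓ
      _ = _ := by
          rw [sub_eq_add_neg, Real.rpow_add hn', Real.rpow_one]
          push_cast
          field_simp
          ring
  rw [h_union]
  calc _ ≤ ∑ ℓ ∈ Finset.Icc 1 n, ∑ γ : Path n ℓ,
        P n {ω | weight ω γ ≤ Real.exp (-1) * ℓ - Real.log n} :=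
      (measure_biUnion_finset_le _ _).trans
        (Finset.sum_le_sum fun _ _ => measure_iUnion_fintype_le _ _)
    _ ≤ ∑ ℓ ∈ Finset.Icc 1 n, ENNReal.ofReal ((n : ℝ) ^ (1 - Real.exp 1)) :=
      Finset.sum_le_sum fun ℓ _ =>
        (Finset.sum_le_sum fun γ _ => P_weight_le_le_rpow hn γ).trans (h_length ℓ)
    _ = _ := by
      rw [Finset.sum_const, Nat.card_Icc, Nat.add_sub_cancel, nsmul_eq_mul,
        ← ENNReal.ofReal_natCast, ← ENNReal.ofReal_mul hn'.le,
        show (2 : ℝ) - Real.exp 1 = 1 + (1 - Real.exp 1) by ring, Real.rpow_add hn', Real.rpow_one]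

/-- Lemma 2.1: the probability that some path (of length 1 ≤ ℓ ≤ n) has weight at most
ℓ/e - log n tends to zero. -/
theorem no_very_light_path :
    Tendsto (fun n : ℕ =>
        P n {ω | ∃ ℓ : ℕ, 1 ≤ ℓ ∧ ℓ ≤ n ∧ ∃ γ : Path n ℓ,
          weight ω γ ≤ Real.exp (-1) * ℓ - Real.log n})
      atTop (nhds 0) := by
  have h_exponent : 2 - Real.exp 1 < 0 := by linarith [Real.add_one_lt_exp one_ne_zero]
  have h_bound :
      Tendsto (fun n : ℕ => ENNReal.ofReal ((n : ℝ) ^ (2 - Real.exp 1))) atTop (nhds 0) := by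
    rw [← ENNReal.ofReal_zero]
    refine ENNReal.tendsto_ofReal ?_
    simpa [Function.comp_def] using
      (tendsto_rpow_neg_atTop (neg_pos.mpr h_exponent)).comp tendsto_natCast_atTop_atTop
  refine tendsto_of_tendsto_of_tendsto_of_le_of_le' tendsto_const_nhds h_bound
    (Eventually.of_forall fun _ => zero_le) ?_
  filter_upwards [eventually_gt_atTop 0] with n hn using P_exists_light_path_le hn

end Paper
end

section
/- There exist absolute constants c, C > 0 such that the following holds. Let θ ∈ [1/4, 4] and let m, n be positive integers with θm ≥ 400 and m ≤ n/3, and define g(z) = f_{θ,m}(z)·f_{θ,n−m}(θn − z) / f_{θ,n}(θn) for 0 < z < θn (g is the conditional density at z of Z' = Z_1 + ⋯ + Z_m given Z_1 + ⋯ + Z_n = θn, for i.i.d. exponential variables Z_i with mean θ). Then for every z with 1 ≤ |z − θm| ≤ 10·√(θm) one has c/√(θm) ≤ g(z) ≤ C/√(θm). -/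
/-!
Writing `z = θ m + t` and `k = n - m`, the exponentials cancel and the conditional density is
exactly `binomialMeanProb m k / θ` times the tilt factor
`(1 + t / (θ m)) ^ (m - 1) * (1 - t / (θ k)) ^ (k - 1)`.
Stirling's formula with the effective bounds `1 ≤ stirlingSeq n ≤ 3` gives
`binomialMeanProb m k ≍ 1 / √m` for `m ≤ k`. In the logarithm of the tilt factor the
first-order terms cancel up to `O(1)` and the second-order terms are `O(t² / (θ² m)) = O(1)`
because `|t| ≤ 10 √(θ m)`, so the tilt factor is bounded above and below by absolute constants.
-/

open MeasureTheory ProbabilityTheory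

namespace Paper

/-- The Gamma density with shape `k` and scale `θ`:
`f_{θ,k}(z) = z^{k-1} e^{-z/θ} / (θ^k (k-1)!)`. -/
noncomputable def gammaDensity (θ : ℝ) (k : ℕ) (z : ℝ) : ℝ :=
  z ^ (k - 1) * Real.exp (-z / θ) / (θ ^ k * (Nat.factorial (k - 1)))

open Real Stirling

/-- `P(Bin(m + k, m / (m + k)) = m)`. -/
noncomputable def binomialMeanProb (m k : ℕ) : ℝ :=
  (m + k).choose m * m ^ m * k ^ k / (m + k : ℝ) ^ (m + k)

lemma gammaDensity_mul_gammaDensity_div_eq {θ t : ℝ} {m k : ℕ} (hθ : θ ≠ 0) (hm : m ≠ 0)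
    (hk : k ≠ 0) :
    gammaDensity θ m (θ * m + t) * gammaDensity θ k (θ * k - t) /
        gammaDensity θ (m + k) (θ * (m + k : ℕ)) =
      binomialMeanProb m k / θ *
        ((1 + t / (θ * m)) ^ (m - 1) * (1 - t / (θ * k)) ^ (k - 1)) := by
  have hexp :
      exp (-(θ * m + t) / θ) * exp (-(θ * k - t) / θ) = exp (-(θ * (m + k : ℕ)) / θ) := by
    rw [← exp_add]; congr 1; push_cast; field_simp; ring
  have hθm : θ * m ≠ 0 := by positivity
  have hθk : θ * k ≠ 0 := by positivity
  rw [show 1 + t / (θ * m) = (θ * m + t) / (θ * m) by field_simp,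
    show 1 - t / (θ * k) = (θ * k - t) / (θ * k) by field_simp, div_pow, div_pow]
  obtain ⟨a, rfl⟩ : ∃ a, m = a + 1 := ⟨m - 1, by omega⟩
  obtain ⟨b, rfl⟩ : ∃ b, k = b + 1 := ⟨k - 1, by omega⟩
  rw [binomialMeanProb, Nat.cast_choose ℝ (Nat.le_add_right _ _), Nat.add_sub_cancel_left]
  simp only [gammaDensity, Nat.add_sub_cancel, show a + 1 + (b + 1) - 1 = a + b + 1 by omega]
  rw [← hexp, show a + 1 + (b + 1) = a + b + 1 + 1 by omega, Nat.factorial_succ (a + b + 1),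
    Nat.factorial_succ a, Nat.factorial_succ b]
  have := exp_pos (-(θ * (a + 1 : ℕ) + t) / θ)
  have := exp_pos (-(θ * (b + 1 : ℕ) - t) / θ)
  push_cast
  simp only [mul_pow]
  field_simp
  ring

lemma one_le_stirlingSeq {n : ℕ} (hn : n ≠ 0) : 1 ≤ stirlingSeq n :=
  (one_le_sqrt.mpr (by linarith [pi_gt_three])).trans (sqrt_pi_le_stirlingSeq hn)

lemma stirlingSeq_le_three {n : ℕ} (hn : n ≠ 0) : stirlingSeq n ≤ 3 := by
  obtain ⟨n, rfl⟩ := Nat.exists_eq_succ_of_ne_zero hn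
  calc stirlingSeq (n + 1) ≤ stirlingSeq 1 := stirlingSeq'_antitone (Nat.zero_le n)
    _ = exp 1 / √2 := stirlingSeq_one
    _ ≤ exp 1 := div_le_self (exp_pos 1).le (one_le_sqrt.mpr one_le_two)
    _ ≤ 3 := exp_one_lt_three.le

lemma factorial_eq_stirlingSeq_mul {n : ℕ} (hn : n ≠ 0) :
    (n.factorial : ℝ) = stirlingSeq n * (√(2 * n) * (n / exp 1) ^ n) := by
  have : (0 : ℝ) < n := by positivity
  rw [stirlingSeq, div_mul_cancel₀]
  positivity

lemma binomialMeanProb_eq_stirlingSeq {m k : ℕ} (hm : m ≠ 0) (hk : k ≠ 0) :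
    binomialMeanProb m k =
      stirlingSeq (m + k) / (stirlingSeq m * stirlingSeq k) *
        (√(2 * (m + k)) / (√(2 * m) * √(2 * k))) := by
  rw [binomialMeanProb, Nat.cast_choose ℝ (Nat.le_add_right m k), Nat.add_sub_cancel_left,
    factorial_eq_stirlingSeq_mul hm, factorial_eq_stirlingSeq_mul hk,
    factorial_eq_stirlingSeq_mul (by omega)]
  have := (zero_lt_one.trans_le (one_le_stirlingSeq hm)).ne'
  have := (zero_lt_one.trans_le (one_le_stirlingSeq hk)).ne'
  have : (0 : ℝ) < m := by positivity
  have : (0 : ℝ) < k := by positivity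
  push_cast
  simp only [div_pow, pow_add]
  field_simp

lemma sqrt_two_mul_add_div_bounds {a b : ℝ} (ha : 0 < a) (hab : a ≤ b) :
    1 / (2 * √a) ≤ √(2 * (a + b)) / (√(2 * a) * √(2 * b)) ∧
      √(2 * (a + b)) / (√(2 * a) * √(2 * b)) ≤ 1 / √a := by
  have hb : 0 < b := ha.trans_le hab
  constructor
  · rw [div_le_div_iff₀ (by positivity) (by positivity), one_mul, ← sqrt_mul (by positivity),
      show 2 * √a = √(4 * a) by rw [sqrt_mul (by norm_num), show (4:ℝ) = 2 ^ 2 by norm_num,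
        sqrt_sq (by norm_num)], ← sqrt_mul (by positivity)]
    exact sqrt_le_sqrt (by nlinarith)
  · rw [div_le_div_iff₀ (by positivity) (by positivity), one_mul, ← sqrt_mul (by positivity),
      ← sqrt_mul (by positivity)]
    exact sqrt_le_sqrt (by nlinarith)

lemma binomialMeanProb_bounds {m k : ℕ} (hm : m ≠ 0) (hmk : m ≤ k) :
    1 / (18 * √m) ≤ binomialMeanProb m k ∧ binomialMeanProb m k ≤ 3 / √m := by
  have hk : k ≠ 0 := by omega
  rw [binomialMeanProb_eq_stirlingSeq hm hk]
  obtain ⟨hr₁, hr₂⟩ := sqrt_two_mul_add_div_bounds (a := m) (b := k) (by positivity)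
    (by exact_mod_cast hmk)
  have hm₁ := one_le_stirlingSeq hm
  have hm₃ := stirlingSeq_le_three hm
  have hk₁ := one_le_stirlingSeq hk
  have hk₃ := stirlingSeq_le_three hk
  have hn₁ := one_le_stirlingSeq (n := m + k) (by omega)
  have hn₃ := stirlingSeq_le_three (n := m + k) (by omega)
  have hs₁ : 1 / 9 ≤ stirlingSeq (m + k) / (stirlingSeq m * stirlingSeq k) := by
    rw [le_div_iff₀ (by nlinarith)]
    nlinarith
  have hs₂ : stirlingSeq (m + k) / (stirlingSeq m * stirlingSeq k) ≤ 3 := by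
    rw [div_le_iff₀ (by nlinarith)]
    nlinarith
  have : 0 < √(m : ℝ) := by positivity
  constructor
  · calc 1 / (18 * √m) = 1 / 9 * (1 / (2 * √m)) := by field_simp; norm_num
      _ ≤ _ := mul_le_mul hs₁ hr₁ (by positivity) (by positivity)
  · calc _ ≤ 3 * (1 / √m) := mul_le_mul hs₂ hr₂ (by positivity) (by positivity)
      _ = 3 / √m := by ring

lemma binomialMeanProb_div_bounds {θ : ℝ} {m k : ℕ} (hθ₁ : 1 / 4 ≤ θ) (hθ₄ : θ ≤ 4)
    (hm : m ≠ 0) (hmk : m ≤ k) :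
    1 / (36 * √(θ * m)) ≤ binomialMeanProb m k / θ ∧
      binomialMeanProb m k / θ ≤ 6 / √(θ * m) := by
  obtain ⟨hB₁, hB₂⟩ := binomialMeanProb_bounds hm hmk
  have hθ : 0 < θ := by linarith
  have hsm : 0 < √(m : ℝ) := by positivity
  have hsθ : √θ * √θ = θ := mul_self_sqrt hθ.le
  have hsθ₁ : 1 / 2 ≤ √θ := by nlinarith [sqrt_nonneg θ]
  have hsθ₄ : √θ ≤ 2 := by nlinarith [sqrt_nonneg θ]
  have hθm : √m * θ = √θ * (√θ * √m) := by rw [← mul_assoc, hsθ, mul_comm]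
  rw [sqrt_mul hθ.le]
  constructor
  · calc 1 / (36 * (√θ * √m)) ≤ 1 / (18 * √m) / θ := by
          rw [div_div, div_le_div_iff₀ (by positivity) (by positivity), mul_assoc 18, hθm]
          nlinarith [mul_pos (sqrt_pos.mpr hθ) hsm]
      _ ≤ _ := by gcongr
  · calc _ ≤ 3 / √m / θ := by gcongr
      _ ≤ 6 / (√θ * √m) := by
          rw [div_div, div_le_div_iff₀ (by positivity) (by positivity), hθm]
          nlinarith [mul_pos (sqrt_pos.mpr hθ) hsm]

lemma exp_sub_two_mul_sq_le_one_add {u : ℝ} (hu : -1 / 2 ≤ u) :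
    exp (u - 2 * u ^ 2) ≤ 1 + u := by
  have hpos : 0 < 1 + u := by linarith
  have hlog : u / (1 + u) ≤ log (1 + u) := by
    convert one_sub_inv_le_log_of_pos hpos using 1
    field_simp
    ring
  have hquad : u - 2 * u ^ 2 ≤ u / (1 + u) := by
    rw [le_div_iff₀ hpos]
    nlinarith [sq_nonneg u]
  calc exp (u - 2 * u ^ 2) ≤ exp (log (1 + u)) := exp_le_exp.mpr (hquad.trans hlog)
    _ = 1 + u := exp_log hpos

lemma one_add_pow_bounds (N : ℕ) {u : ℝ} (hu : -1 / 2 ≤ u) :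
    exp (N * (u - 2 * u ^ 2)) ≤ (1 + u) ^ N ∧ (1 + u) ^ N ≤ exp (N * u) := by
  rw [exp_nat_mul, exp_nat_mul]
  exact ⟨pow_le_pow_left₀ (exp_pos _).le (exp_sub_two_mul_sq_le_one_add hu) N,
    pow_le_pow_left₀ (by linarith) (by linarith [add_one_le_exp u]) N⟩

lemma one_add_div_pow_mul_one_sub_div_pow_bounds {θ t : ℝ} {m k : ℕ} (hθ : 0 < θ)
    (hm : m ≠ 0) (hmk : m ≤ k) (ht : |t| ≤ θ * m / 2) :
    exp (-1 - 4 * t ^ 2 / (θ ^ 2 * m)) ≤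
        (1 + t / (θ * m)) ^ (m - 1) * (1 - t / (θ * k)) ^ (k - 1) ∧
      (1 + t / (θ * m)) ^ (m - 1) * (1 - t / (θ * k)) ^ (k - 1) ≤ exp 1 := by
  have hmR : (0 : ℝ) < m := by positivity
  have hmkR : (m : ℝ) ≤ k := by exact_mod_cast hmk
  have hkR : (0 : ℝ) < k := hmR.trans_le hmkR
  set s := t / (θ * m) with hs_def
  set x := -t / (θ * k) with hx_def
  rw [show 1 - t / (θ * k) = 1 + x by rw [hx_def]; ring]
  have hs : |s| ≤ 1 / 2 := by
    rw [hs_def, abs_div, abs_of_pos (by positivity : 0 < θ * m), div_le_iff₀ (by positivity)]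
    linarith
  have hx : |x| ≤ 1 / 2 := by
    rw [hx_def, abs_div, abs_neg, abs_of_pos (by positivity : 0 < θ * k),
      div_le_iff₀ (by positivity)]
    nlinarith
  obtain ⟨hs₁, hs₂⟩ := abs_le.mp hs
  obtain ⟨hx₁, hx₂⟩ := abs_le.mp hx
  obtain ⟨hS₁, hS₂⟩ := one_add_pow_bounds (m - 1) (u := s) (by linarith)
  obtain ⟨hX₁, hX₂⟩ := one_add_pow_bounds (k - 1) (u := x) (by linarith)
  rw [Nat.cast_pred (by omega)] at hS₁ hS₂
  rw [Nat.cast_pred (by omega)] at hX₁ hX₂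
  -- the linear terms of `(m - 1) log (1 + s) + (k - 1) log (1 + x)` almost cancel
  have hlin : (m - 1 : ℝ) * s + (k - 1 : ℝ) * x = -(s + x) := by
    rw [hs_def, hx_def]
    field_simp
    ring
  have hquad : (m - 1 : ℝ) * s ^ 2 + (k - 1 : ℝ) * x ^ 2 ≤ 2 * (t ^ 2 / (θ ^ 2 * m)) := by
    have hms : (m : ℝ) * s ^ 2 = t ^ 2 / (θ ^ 2 * m) := by rw [hs_def]; field_simp
    have hkx : (k : ℝ) * x ^ 2 = t ^ 2 / (θ ^ 2 * k) := by rw [hx_def]; field_simp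
    have : t ^ 2 / (θ ^ 2 * k) ≤ t ^ 2 / (θ ^ 2 * m) := by gcongr
    nlinarith [sq_nonneg s, sq_nonneg x]
  constructor
  · calc exp (-1 - 4 * t ^ 2 / (θ ^ 2 * m))
        ≤ exp ((m - 1 : ℝ) * (s - 2 * s ^ 2)) * exp ((k - 1 : ℝ) * (x - 2 * x ^ 2)) := by
          rw [← exp_add, exp_le_exp, mul_div_assoc]
          linarith
      _ ≤ _ := mul_le_mul hS₁ hX₁ (exp_pos _).le (pow_nonneg (by linarith) _)
  · calc _ ≤ exp ((m - 1 : ℝ) * s) * exp ((k - 1 : ℝ) * x) :=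
          mul_le_mul hS₂ hX₂ (pow_nonneg (by linarith) _) (exp_pos _).le
      _ = exp (-(s + x)) := by rw [← exp_add, hlin]
      _ ≤ exp 1 := exp_le_exp.mpr (by linarith)

lemma sq_le_sq_mul_of_abs_le_mul_sqrt {a c t : ℝ} (ha : 0 ≤ a) (h : |t| ≤ c * √a) :
    t ^ 2 ≤ c ^ 2 * a := by
  calc t ^ 2 = |t| ^ 2 := (sq_abs t).symm
    _ ≤ (c * √a) ^ 2 := pow_le_pow_left₀ (abs_nonneg t) h 2
    _ = c ^ 2 * a := by rw [mul_pow, sq_sqrt ha]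

/-- Claim 2.1: two-sided bound on the conditional density
`g(z) = f_{θ,m}(z) f_{θ,n-m}(θn - z) / f_{θ,n}(θn)` of the sum of the first `m` of `n`
i.i.d. exponential variables of mean `θ` given that the total sum equals `θn`, for `z`
with `1 ≤ |z - θm| ≤ 10√(θm)`. -/
theorem conditional_density_bounds :
    ∃ c C : ℝ, 0 < c ∧ 0 < C ∧
      ∀ θ : ℝ, 1 / 4 ≤ θ → θ ≤ 4 →
      ∀ m n : ℕ, 0 < m → 0 < n → 400 ≤ θ * m → (m : ℝ) ≤ (n : ℝ) / 3 →
      ∀ z : ℝ, 0 < z → z < θ * n →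
        1 ≤ |z - θ * m| → |z - θ * m| ≤ 10 * Real.sqrt (θ * m) →
        c / Real.sqrt (θ * m) ≤
            gammaDensity θ m z * gammaDensity θ (n - m) (θ * n - z) /
              gammaDensity θ n (θ * n) ∧
          gammaDensity θ m z * gammaDensity θ (n - m) (θ * n - z) /
              gammaDensity θ n (θ * n) ≤
            C / Real.sqrt (θ * m) := by
  refine ⟨exp (-1601) / 36, 6 * exp 1, by positivity, by positivity, ?_⟩
  intro θ hθ₁ hθ₄ m n hm _ hθm hmn z _ _ _ hz
  have hθ : 0 < θ := by linarith
  have h3m : 3 * m ≤ n := by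
    have : (3 * m : ℝ) ≤ n := by linarith
    exact_mod_cast this
  obtain ⟨k, rfl⟩ := Nat.exists_eq_add_of_le (show m ≤ n by omega)
  have hmk : m ≤ k := by omega
  obtain ⟨t, rfl⟩ : ∃ t, z = θ * m + t := ⟨z - θ * m, by ring⟩
  rw [add_sub_cancel_left] at hz
  have ht₂ : t ^ 2 ≤ 10 ^ 2 * (θ * m) := sq_le_sq_mul_of_abs_le_mul_sqrt (by positivity) hz
  -- `θ m ≥ 400` is what makes the window `|t| ≤ 10 √(θ m)` fit inside `|t| ≤ θ m / 2`
  have ht : |t| ≤ θ * m / 2 := abs_le_of_sq_le_sq (by nlinarith) (by positivity)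
  have hexp : exp (-1601) ≤ exp (-1 - 4 * t ^ 2 / (θ ^ 2 * m)) := by
    have : 4 * t ^ 2 / (θ ^ 2 * m) ≤ 1600 := by
      rw [div_le_iff₀ (by positivity)]
      nlinarith
    exact exp_le_exp.mpr (by linarith)
  rw [Nat.add_sub_cancel_left,
    show θ * ((m + k : ℕ) : ℝ) - (θ * m + t) = θ * k - t by push_cast; ring,
    gammaDensity_mul_gammaDensity_div_eq hθ.ne' (by omega) (by omega)]
  obtain ⟨hB₁, hB₂⟩ := binomialMeanProb_div_bounds hθ₁ hθ₄ (by omega) hmk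
  obtain ⟨hQ₁, hQ₂⟩ := one_add_div_pow_mul_one_sub_div_pow_bounds hθ (by omega) hmk ht
  have hB₀ : 0 ≤ binomialMeanProb m k / θ := (by positivity : (0 : ℝ) ≤ _).trans hB₁
  constructor
  · calc exp (-1601) / 36 / √(θ * m) = 1 / (36 * √(θ * m)) * exp (-1601) := by ring
      _ ≤ _ := mul_le_mul hB₁ (hexp.trans hQ₁) (exp_pos _).le hB₀
  · calc _ ≤ 6 / √(θ * m) * exp 1 :=
          mul_le_mul hB₂ hQ₂ ((exp_pos _).le.trans hQ₁) (by positivity)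
      _ = 6 * exp 1 / √(θ * m) := by ring

end Paper
end

section
/- Let γ and γ' be two paths in the complete graph on {1,…,n}, let S = E(γ) ∩ E(γ'), and let V(S) denote the set of vertices that are endpoints of edges in S. Then |V(S)| = |S| + θ(γ, γ'). -/
open MeasureTheory ProbabilityTheory Filter Finset

namespace Paper

/-- The set of edges of a path. -/
def edgeFinset {n ℓ : ℕ} (γ : Path n ℓ) : Finset (Sym2 (Fin n)) :=
  Finset.image γ.edge Finset.univ

/-- `i` is the starting index of an `S`-component of `γ`, where `S = E(γ) ∩ E(γ')`:
the `i`-th edge lies in `S` and either `i = 0` or the previous edge does not lie in `S`.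
Maximal segments of `γ` all of whose edges lie in `S` correspond bijectively to their
starting indices. -/
def compStart {n ℓ ℓ' : ℕ} (γ : Path n ℓ) (γ' : Path n ℓ') (i : Fin ℓ) : Prop :=
  γ.edge i ∈ edgeFinset γ ∩ edgeFinset γ' ∧
    ((i : ℕ) = 0 ∨
      γ.edge ⟨(i : ℕ) - 1, Nat.lt_of_le_of_lt (Nat.sub_le _ _) i.2⟩ ∉
        edgeFinset γ ∩ edgeFinset γ')

/-- `θ(γ, γ')`: the number of `S`-components of `γ` for `S = E(γ) ∩ E(γ')`, counted via
their starting indices. -/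
noncomputable def theta {n ℓ ℓ' : ℕ} (γ : Path n ℓ) (γ' : Path n ℓ') : ℕ := by
  classical exact (Finset.univ.filter fun i : Fin ℓ => compStart γ γ' i).card

/-- `V(S)`: the set of vertices that are endpoints of edges in `S`. -/
noncomputable def vertexFinset {n : ℕ} (S : Finset (Sym2 (Fin n))) : Finset (Fin n) := by
  classical exact Finset.univ.filter fun v => ∃ e ∈ S, v ∈ e

/-- `A_{i,j}(γ)`: the set of paths `γ'` of the same length with `θ(γ,γ') = i` and
`|E(γ) ∩ E(γ')| = j`. -/
noncomputable def Aset {n ℓ : ℕ} (γ : Path n ℓ) (i j : ℕ) : Finset (Path n ℓ) := by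
  classical
  exact Finset.univ.filter fun γ' =>
    theta γ γ' = i ∧ (edgeFinset γ ∩ edgeFinset γ').card = j
/-- Lemma 2.8: for two paths γ, γ' and S = E(γ) ∩ E(γ'), |V(S)| = |S| + θ(γ, γ'). -/
theorem vertex_edge_count (n ℓ ℓ' : ℕ) (γ : Path n ℓ) (γ' : Path n ℓ') :
    (vertexFinset (edgeFinset γ ∩ edgeFinset γ')).card =
      (edgeFinset γ ∩ edgeFinset γ').card + theta γ γ' := by
  classical
  set S := edgeFinset γ ∩ edgeFinset γ' with hS
  set T : Finset (Fin ℓ) := Finset.univ.filter (fun i => γ.edge i ∈ S) with hT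
  have hmemT : ∀ i : Fin ℓ, i ∈ T ↔ γ.edge i ∈ S := by
    intro i; simp [hT]
  -- injectivity of the edge map
  have hinj : Function.Injective γ.edge := by
    intro i j h
    simp only [Path.edge, Sym2.eq, Sym2.rel_iff', Prod.mk.injEq, Prod.swap_prod_mk] at h
    rcases h with ⟨h1, h2⟩ | ⟨h1, h2⟩
    · have := congrArg Fin.val (γ.2 h1)
      simp only [Fin.coe_castSucc] at this
      exact Fin.ext this
    · have e1 := congrArg Fin.val (γ.2 h1)
      have e2 := congrArg Fin.val (γ.2 h2)
      simp only [Fin.coe_castSucc, Fin.val_succ] at e1 e2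
      omega
  -- S is the image of T under the edge map
  have hSimg : S = T.image γ.edge := by
    ext e
    simp only [Finset.mem_image]
    constructor
    · intro he
      have heγ : e ∈ edgeFinset γ := (Finset.mem_inter.1 he).1
      obtain ⟨i, _, hi⟩ := Finset.mem_image.1 heγ
      exact ⟨i, (hmemT i).2 (hi ▸ he), hi⟩
    · rintro ⟨i, hi, rfl⟩
      exact (hmemT i).1 hi
  have hcardS : S.card = T.card := by
    rw [hSimg, Finset.card_image_of_injective _ hinj]
  -- the vertex set as image of index sets
  set A : Finset (Fin (ℓ + 1)) := T.image Fin.castSucc with hA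
  set B : Finset (Fin (ℓ + 1)) := T.image Fin.succ with hB
  have hVimg : vertexFinset S = (A ∪ B).image γ.1 := by
    ext v
    simp only [vertexFinset, Finset.mem_filter, Finset.mem_univ, true_and,
      Finset.mem_image, Finset.mem_union, hA, hB]
    constructor
    · rintro ⟨e, he, hv⟩
      rw [hSimg, Finset.mem_image] at he
      obtain ⟨i, hi, rfl⟩ := he
      rw [Path.edge, Sym2.mem_iff] at hv
      rcases hv with h | h
      · exact ⟨i.castSucc, Or.inl ⟨i, hi, rfl⟩, h.symm⟩
      · exact ⟨i.succ, Or.inr ⟨i, hi, rfl⟩, h.symm⟩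
    · rintro ⟨k, hk | hk, rfl⟩
      · obtain ⟨i, hi, rfl⟩ := hk
        exact ⟨γ.edge i, (hmemT i).1 hi, by rw [Path.edge]; exact Sym2.mem_mk_left _ _⟩
      · obtain ⟨i, hi, rfl⟩ := hk
        exact ⟨γ.edge i, (hmemT i).1 hi, by rw [Path.edge]; exact Sym2.mem_mk_right _ _⟩
  have hcardV : (vertexFinset S).card = (A ∪ B).card := by
    rw [hVimg, Finset.card_image_of_injective _ γ.2]
  -- card of B
  have hcardB : B.card = T.card := Finset.card_image_of_injective _ (Fin.succ_injective _)
  -- A \ B is the image of the component starts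
  have hsdiff : A \ B =
      (Finset.univ.filter fun i : Fin ℓ => compStart γ γ' i).image Fin.castSucc := by
    ext k
    simp only [Finset.mem_sdiff, Finset.mem_image, Finset.mem_filter, Finset.mem_univ,
      true_and, hA, hB]
    constructor
    · rintro ⟨⟨i, hi, rfl⟩, hnb⟩
      refine ⟨i, ⟨(hmemT i).1 hi, ?_⟩, rfl⟩
      by_cases h0 : (i : ℕ) = 0
      · exact Or.inl h0
      · refine Or.inr ?_
        intro hmem
        apply hnb
        refine ⟨⟨(i : ℕ) - 1, Nat.lt_of_le_of_lt (Nat.sub_le _ _) i.2⟩,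
          (hmemT _).2 hmem, ?_⟩
        apply Fin.ext
        simp only [Fin.val_succ, Fin.coe_castSucc]
        omega
    · rintro ⟨i, ⟨hiS, hstart⟩, rfl⟩
      refine ⟨⟨i, (hmemT i).2 hiS, rfl⟩, ?_⟩
      rintro ⟨j, hj, hje⟩
      have hval : (j : ℕ) + 1 = (i : ℕ) := by
        have := congrArg Fin.val hje
        simpa using this
      rcases hstart with h0 | hne
      · omega
      · apply hne
        have : (⟨(i : ℕ) - 1, Nat.lt_of_le_of_lt (Nat.sub_le _ _) i.2⟩ : Fin ℓ) = j := by
          apply Fin.ext; simp; omega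
        rw [this]
        exact (hmemT j).1 hj
  have hcardsd : (A \ B).card = theta γ γ' := by
    rw [hsdiff, Finset.card_image_of_injective _ (Fin.castSucc_injective _), theta]
  have hunion : (A ∪ B).card = T.card + theta γ γ' := by
    rw [← Finset.card_sdiff_add_card, hcardsd, hcardB, Nat.add_comm]
  rw [hcardV, hunion, hcardS]

end Paper
end

section
/- Let n ≥ 2 and 1 ≤ ℓ ≤ n − 1 be integers and let γ ∈ Γ_ℓ. Then for all integers 0 ≤ i ≤ j ≤ ℓ, the set A_{i,j}(γ) satisfies |A_{i,j}(γ)| ≤ binom(ℓ+1, 2i) · binom(n−i−j, ℓ+1−i−j) · 2^i · (ℓ+1−j)! . -/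
open MeasureTheory ProbabilityTheory Filter Finset

namespace Paper

/-!
Write `S = E(γ) ∩ E(γ')`. The `S`-components of `γ'` occupy disjoint blocks of consecutive
positions, and each of them is, as a sequence of vertices, an `S`-component of `γ` read
forwards or backwards. A path meets `V(S)` in `|S| + θ` positions, so `γ` and `γ'` have the
same number `i` of `S`-components, and `|V(S)| = i + j`. Hence `γ'` is determined by
* the first and last positions of its blocks, a `2i`-subset of `{0, …, ℓ}` from which the
  blocks are recovered by parity;
* the direction in which each block runs through `γ`;
* the position of each block in `γ` after every block of `γ` is contracted to a point: these
  positions are distinct, lie in `{0, …, ℓ - j}`, and together with the block lengths they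
  give back the true positions;
* the vertices at the `ℓ + 1 - i - j` remaining positions, an injective sequence in the
  `n - i - j` vertices outside `V(S)`.
There are `C(ℓ+1, 2i) · 2^i · (ℓ+1-j)_i · (n-i-j)_{ℓ+1-i-j}` such data, and
`(ℓ+1-j)_i · (ℓ+1-i-j)! ≤ (ℓ+1-j)!`.
-/

open scoped symmDiff

section Runs

variable (I : Finset ℕ)

def runStarts : Finset ℕ := I \ I.image (· + 1)

-- the endpoints of the blocks `runBlock I s`, `s ∈ runStarts I`
def runBoundary : Finset ℕ := I ∆ I.image (· + 1)

lemma exists_add_notMem (s : ℕ) : ∃ r, s + r ∉ I := by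
  obtain ⟨N, hN⟩ := I.exists_nat_subset_range
  exact ⟨N, fun h => absurd (mem_range.1 (hN h)) (by omega)⟩

def runLen (s : ℕ) : ℕ := Nat.find (exists_add_notMem I s)

def runBlock (s : ℕ) : Finset ℕ := Icc s (s + runLen I s)

variable {I}

lemma card_image_succ_sdiff : #(I.image (· + 1) \ I) = #(runStarts I) := by
  have h₁ := card_sdiff_add_card_inter (I.image (· + 1)) I
  have h₂ := card_sdiff_add_card_inter I (I.image (· + 1))
  rw [card_image_of_injective _ (add_left_injective 1), inter_comm] at h₁
  rw [runStarts]
  omega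

lemma card_union_image_succ : #(I ∪ I.image (· + 1)) = #I + #(runStarts I) := by
  rw [← card_image_succ_sdiff, ← card_union_of_disjoint disjoint_sdiff,
    union_sdiff_self_eq_union]

lemma card_runBoundary : #(runBoundary I) = 2 * #(runStarts I) := by
  rw [runBoundary, Finset.symmDiff_def, card_union_of_disjoint disjoint_sdiff_sdiff,
    card_image_succ_sdiff, runStarts]
  ring

lemma mem_iff_odd_count_runBoundary (k : ℕ) :
    k ∈ I ↔ Odd (Nat.count (· ∈ runBoundary I) (k + 1)) := by
  induction k with
  | zero => by_cases h : 0 ∈ I <;> simp [Nat.count_succ, runBoundary, mem_symmDiff, h]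
  | succ k ih =>
    have hsucc : k + 1 ∈ I.image (· + 1) ↔ k ∈ I := by simp
    rw [Nat.count_succ, Nat.odd_add, ← ih]
    by_cases h : k ∈ I <;> by_cases h' : k + 1 ∈ I <;>
      simp [runBoundary, mem_symmDiff, hsucc, h, h']

lemma runBoundary_injective : Function.Injective (runBoundary : Finset ℕ → Finset ℕ) := by
  intro I J h
  ext k
  rw [mem_iff_odd_count_runBoundary, mem_iff_odd_count_runBoundary, h]

lemma add_mem_of_lt_runLen {s r : ℕ} (h : r < runLen I s) : s + r ∈ I :=
  not_not.1 (Nat.find_min _ h)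

lemma mem_of_le_of_lt_add_runLen {s k : ℕ} (h₁ : s ≤ k) (h₂ : k < s + runLen I s) :
    k ∈ I := by
  obtain ⟨r, rfl⟩ := Nat.exists_eq_add_of_le h₁
  exact add_mem_of_lt_runLen (by omega)

lemma add_runLen_notMem (s : ℕ) : s + runLen I s ∉ I :=
  Nat.find_spec (exists_add_notMem I s)

lemma runLen_le {s r : ℕ} (h : s + r ∉ I) : runLen I s ≤ r :=
  Nat.find_min' _ h

lemma runLen_pos {s : ℕ} (hs : s ∈ I) : 0 < runLen I s :=
  Nat.pos_of_ne_zero fun h => add_runLen_notMem (I := I) s (by rwa [h])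

lemma exists_runStarts_le_lt {k : ℕ} (hk : k ∈ I) :
    ∃ s ∈ runStarts I, s ≤ k ∧ k < s + runLen I s := by
  induction k using Nat.strong_induction_on with
  | _ k ih =>
    by_cases hk' : k ∈ I.image (· + 1)
    · obtain ⟨a, ha, rfl⟩ := mem_image.1 hk'
      obtain ⟨s, hs, hsa, has⟩ := ih a (by omega) ha
      refine ⟨s, hs, by omega, lt_of_le_of_ne has fun h => add_runLen_notMem (I := I) s ?_⟩
      rwa [← h]
    · exact ⟨k, mem_sdiff.2 ⟨hk, hk'⟩, le_rfl, by simpa using runLen_pos hk⟩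

lemma add_runLen_lt {s s' : ℕ} (hs' : s' ∈ runStarts I) (h : s < s') :
    s + runLen I s < s' := by
  have hprev : s + (s' - 1 - s) ∉ I := fun hI =>
    (mem_sdiff.1 hs').2 (mem_image.2 ⟨_, hI, by omega⟩)
  have := runLen_le hprev
  omega

lemma disjoint_runBlock {s s' : ℕ} (hs : s ∈ runStarts I) (hs' : s' ∈ runStarts I)
    (hne : s ≠ s') : Disjoint (runBlock I s) (runBlock I s') := by
  refine disjoint_left.2 fun p hp hp' => ?_
  rw [runBlock, mem_Icc] at hp hp'
  rcases lt_or_gt_of_ne hne with h | h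
  · have := add_runLen_lt hs' h
    omega
  · have := add_runLen_lt hs h
    omega

lemma sum_runLen : ∑ s ∈ runStarts I, runLen I s = #I := by
  have hI : I = (runStarts I).biUnion fun s => Ico s (s + runLen I s) := by
    ext k
    simp only [mem_biUnion, mem_Ico]
    refine ⟨fun hk => exists_runStarts_le_lt hk, ?_⟩
    rintro ⟨s, -, h₁, h₂⟩
    exact mem_of_le_of_lt_add_runLen h₁ h₂
  conv_rhs => rw [hI]
  rw [card_biUnion fun s hs s' hs' hne =>
    (disjoint_runBlock hs hs' hne).mono Ico_subset_Icc_self Ico_subset_Icc_self]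
  simp

lemma runBlock_subset {s : ℕ} (hs : s ∈ runStarts I) :
    runBlock I s ⊆ I ∪ I.image (· + 1) := by
  intro p hp
  rw [runBlock, mem_Icc] at hp
  have hpos := runLen_pos (sdiff_subset hs)
  rcases lt_or_eq_of_le hp.2 with h | h
  · exact mem_union_left _ (mem_of_le_of_lt_add_runLen hp.1 h)
  · exact mem_union_right _
      (mem_image.2 ⟨p - 1, mem_of_le_of_lt_add_runLen (s := s) (by omega) (by omega), by omega⟩)

lemma exists_mem_runBlock {p : ℕ} (hp : p ∈ I ∪ I.image (· + 1)) :
    ∃ s ∈ runStarts I, p ∈ runBlock I s := by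
  rcases mem_union.1 hp with hp | hp
  · obtain ⟨s, hs, h₁, h₂⟩ := exists_runStarts_le_lt hp
    exact ⟨s, hs, mem_Icc.2 ⟨h₁, h₂.le⟩⟩
  · obtain ⟨k, hk, rfl⟩ := mem_image.1 hp
    obtain ⟨s, hs, h₁, h₂⟩ := exists_runStarts_le_lt hk
    exact ⟨s, hs, mem_Icc.2 ⟨by omega, by omega⟩⟩

end Runs

section Compression

variable {ι : Type*} (T : Finset ι) (b m : ι → ℕ)

def DisjointIntervals : Prop := (T : Set ι).PairwiseDisjoint fun t => Icc (b t) (b t + m t)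

-- the position of block `t` once every block `[b u, b u + m u]` is contracted to a point
def compress (t : ι) : ℕ := b t - ∑ u ∈ T with b u < b t, m u

variable {T b m}

lemma sum_add_one_le_of_subset_Ico (hdisj : DisjointIntervals T b m) {F : Finset ι}
    (hF : F ⊆ T) {x y : ℕ} (hxy : ∀ u ∈ F, Icc (b u) (b u + m u) ⊆ Ico x y) :
    ∑ u ∈ F, (m u + 1) ≤ y - x := by
  classical
  calc ∑ u ∈ F, (m u + 1) = #(F.biUnion fun u => Icc (b u) (b u + m u)) := by
        rw [card_biUnion (hdisj.subset (coe_subset.2 hF))]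
        exact sum_congr rfl fun u _ => by rw [Nat.card_Icc]; omega
    _ ≤ #(Ico x y) := card_le_card (biUnion_subset.2 hxy)
    _ = y - x := Nat.card_Ico x y

lemma DisjointIntervals.add_lt (hdisj : DisjointIntervals T b m) {u t : ι} (hu : u ∈ T)
    (ht : t ∈ T) (h : b u < b t) : b u + m u < b t := by
  by_contra! h'
  have hne : u ≠ t := fun e => by subst e; omega
  exact disjoint_left.1 (hdisj hu ht hne) (mem_Icc.2 ⟨h.le, h'⟩)
    (mem_Icc.2 ⟨le_rfl, by omega⟩)

lemma DisjointIntervals.injOn (hdisj : DisjointIntervals T b m) : Set.InjOn b T := by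
  intro u hu t ht h
  by_contra hne
  exact disjoint_left.1 (hdisj hu ht hne) (mem_Icc.2 ⟨le_rfl, by omega⟩)
    (mem_Icc.2 ⟨h.ge, by omega⟩)

lemma sum_filter_lt_le (hdisj : DisjointIntervals T b m) {t : ι} (ht : t ∈ T) :
    ∑ u ∈ T with b u < b t, (m u + 1) ≤ b t := by
  simpa using sum_add_one_le_of_subset_Ico hdisj (filter_subset _ T) (x := 0) (y := b t)
    fun u hu => Icc_subset_Ico_iff (by omega) |>.2
      ⟨Nat.zero_le _, hdisj.add_lt (mem_filter.1 hu).1 ht (mem_filter.1 hu).2⟩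

lemma compress_lt_compress (hdisj : DisjointIntervals T b m) {u t : ι} (hu : u ∈ T)
    (ht : t ∈ T) (h : b u < b t) : compress T b m u < compress T b m t := by
  have hsplit := sum_filter_add_sum_filter_not (T.filter (b · < b t)) (b · < b u) m
  rw [filter_filter, filter_filter] at hsplit
  have hbelow : T.filter (fun w => b w < b t ∧ b w < b u) = T.filter (b · < b u) :=
    filter_congr fun w _ => ⟨And.right, fun hw => ⟨hw.trans h, hw⟩⟩
  rw [hbelow] at hsplit
  set F := T.filter fun w => b w < b t ∧ ¬b w < b u
  -- the blocks between `u` (included) and `t` fit into `[b u, b t)`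
  have hF : ∑ w ∈ F, (m w + 1) ≤ b t - b u :=
    sum_add_one_le_of_subset_Ico hdisj (filter_subset _ T) fun w hw => by
      obtain ⟨hw, hwt, hwu⟩ := mem_filter.1 hw
      exact Icc_subset_Ico_iff (by omega) |>.2 ⟨by omega, hdisj.add_lt hw ht hwt⟩
  have hcardF : 1 ≤ #F := card_pos.2 ⟨u, mem_filter.2 ⟨hu, h, lt_irrefl _⟩⟩
  rw [sum_add_distrib, sum_const, smul_eq_mul, mul_one] at hF
  have hu' := sum_filter_lt_le hdisj hu
  rw [sum_add_distrib, sum_const, smul_eq_mul, mul_one] at hu'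
  unfold compress
  omega

lemma compress_lt_compress_iff (hdisj : DisjointIntervals T b m) {u t : ι} (hu : u ∈ T)
    (ht : t ∈ T) : compress T b m u < compress T b m t ↔ b u < b t := by
  refine ⟨fun h => ?_, compress_lt_compress hdisj hu ht⟩
  rcases lt_trichotomy (b u) (b t) with hlt | heq | hgt
  · exact hlt
  · rw [hdisj.injOn hu ht heq] at h
    exact absurd h (lt_irrefl _)
  · exact absurd (compress_lt_compress hdisj ht hu hgt) (lt_asymm h)

lemma compress_injOn (hdisj : DisjointIntervals T b m) : Set.InjOn (compress T b m) T := by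
  intro u hu t ht h
  refine hdisj.injOn hu ht (le_antisymm ?_ ?_)
  · exact not_lt.1 fun hlt => (compress_lt_compress hdisj ht hu hlt).ne h.symm
  · exact not_lt.1 fun hlt => (compress_lt_compress hdisj hu ht hlt).ne h

lemma eq_compress_add_sum (hdisj : DisjointIntervals T b m) {t : ι} (ht : t ∈ T) :
    b t = compress T b m t + ∑ u ∈ T with compress T b m u < compress T b m t, m u := by
  rw [filter_congr fun u hu => compress_lt_compress_iff hdisj hu ht]
  have := sum_filter_lt_le hdisj ht
  rw [sum_add_distrib] at this
  unfold compress
  omega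

lemma eqOn_of_compress_eq {b' : ι → ℕ} (hdisj : DisjointIntervals T b m)
    (hdisj' : DisjointIntervals T b' m) (h : ∀ t ∈ T, compress T b m t = compress T b' m t)
    {t : ι} (ht : t ∈ T) : b t = b' t := by
  rw [eq_compress_add_sum hdisj ht, eq_compress_add_sum hdisj' ht, h t ht]
  exact congrArg _ (sum_congr (filter_congr fun u hu => by rw [h u hu]) fun _ _ => rfl)

lemma compress_add_sum_le (hdisj : DisjointIntervals T b m) {L : ℕ}
    (hL : ∀ t ∈ T, b t + m t ≤ L) {t : ι} (ht : t ∈ T) :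
    compress T b m t + ∑ u ∈ T, m u ≤ L := by
  rw [← sum_filter_add_sum_filter_not T (b · < b t)]
  have habove : ∑ u ∈ T with ¬b u < b t, (m u + 1) ≤ L + 1 - b t :=
    sum_add_one_le_of_subset_Ico hdisj (filter_subset _ T) fun u hu => by
      have := hL u (mem_filter.1 hu).1
      exact Icc_subset_Ico_iff (by omega) |>.2 ⟨not_lt.1 (mem_filter.1 hu).2, by omega⟩
  have hcard : 1 ≤ #(T.filter (¬b · < b t)) :=
    card_pos.2 ⟨t, mem_filter.2 ⟨ht, lt_irrefl _⟩⟩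
  rw [sum_add_distrib, sum_const, smul_eq_mul, mul_one] at habove
  have hbelow := sum_filter_lt_le hdisj ht
  rw [sum_add_distrib] at hbelow
  have := hL t ht
  unfold compress
  omega

end Compression

lemma eq_add_or_add_eq_of_step {g : ℕ → ℕ} {m : ℕ}
    (hstep : ∀ r < m, g (r + 1) = g r + 1 ∨ g r = g (r + 1) + 1)
    (hinj : Set.InjOn g (Set.Iic m)) :
    (∀ r ≤ m, g r = g 0 + r) ∨ (∀ r ≤ m, g r + r = g 0) := by
  induction m with
  | zero => exact Or.inl fun r hr => by simp [Nat.le_zero.1 hr]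
  | succ m ih =>
    have ih := ih (fun r hr => hstep r (by omega)) (hinj.mono (Set.Iic_subset_Iic.2 (by omega)))
    have hm := hstep m (by omega)
    by_cases hm0 : m = 0
    · subst hm0
      rcases hm with h | h
      · exact Or.inl fun r hr => by interval_cases r <;> simp [h]
      · exact Or.inr fun r hr => by interval_cases r <;> simp [h]
    have hback : g (m + 1) ≠ g (m - 1) := fun h => by
      have := hinj (Set.mem_Iic.2 le_rfl) (Set.mem_Iic.2 (by omega)) h
      omega
    refine ih.imp (fun h r hr => ?_) (fun h r hr => ?_) <;>
    · rcases Nat.lt_or_ge r (m + 1) with hr' | hr'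
      · exact h r (by omega)
      · obtain rfl : r = m + 1 := by omega
        have := h m le_rfl
        have := h (m - 1) (by omega)
        omega

section Enumeration

variable {X : Finset ℕ}

lemma nth_mem_of_lt_card_finset {t : ℕ} (ht : t < #X) : Nat.nth (· ∈ X) t ∈ X :=
  Nat.nth_mem_of_lt_card (p := (· ∈ X)) X.finite_toSet (by simpa using ht)

lemma nth_injOn_finset : Set.InjOn (Nat.nth (· ∈ X)) (Set.Iio #X) := by
  simpa using Nat.nth_injOn (p := (· ∈ X)) X.finite_toSet

lemma exists_lt_card_nth_eq_finset {x : ℕ} (hx : x ∈ X) :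
    ∃ t < #X, Nat.nth (· ∈ X) t = x := by
  simpa using Nat.exists_lt_card_finite_nth_eq (p := (· ∈ X)) X.finite_toSet hx

end Enumeration

noncomputable def boundedInjections (a N : ℕ) : Finset (Fin a → ℕ) :=
  (univ : Finset (Fin a ↪ Fin N)).map
    ⟨fun f t => f t, fun f g h => DFunLike.ext f g fun t => Fin.ext (congrFun h t)⟩

lemma card_boundedInjections (a N : ℕ) : #(boundedInjections a N) = N.descFactorial a := by
  simp [boundedInjections, Fintype.card_embedding_eq]

lemma mem_boundedInjections {a N : ℕ} {g : Fin a → ℕ} (hg : Function.Injective g)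
    (hN : ∀ t, g t < N) : g ∈ boundedInjections a N :=
  mem_map.2 ⟨⟨fun t => ⟨g t, hN t⟩, fun _ _ h => hg (Fin.ext_iff.1 h)⟩, mem_univ _, rfl⟩

lemma descFactorial_mul_descFactorial_le (a k N : ℕ) :
    a.descFactorial k * N.descFactorial (a - k) ≤ N.choose (a - k) * a.factorial := by
  rcases le_or_gt k a with hk | hk
  · rw [Nat.descFactorial_eq_factorial_mul_choose N, ← Nat.factorial_mul_descFactorial hk]
    exact le_of_eq (by ring)
  · simp [Nat.descFactorial_eq_zero_iff_lt.2 hk]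

namespace Path

variable {n ℓ : ℕ} (δ : Path n ℓ)

def vertexAt (p : ℕ) : Fin n := δ.1 (Fin.clamp p ℓ)

def edgeAt (k : ℕ) : Sym2 (Fin n) := s(δ.vertexAt k, δ.vertexAt (k + 1))

noncomputable def posOf (v : Fin n) : ℕ := (Function.invFun δ.1 v : Fin (ℓ + 1))

def edgeIndices (S : Finset (Sym2 (Fin n))) : Finset ℕ := (range ℓ).filter (δ.edgeAt · ∈ S)

def vertexIndices (S : Finset (Sym2 (Fin n))) : Finset ℕ :=
  δ.edgeIndices S ∪ (δ.edgeIndices S).image (· + 1)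

def freeIndices (S : Finset (Sym2 (Fin n))) : Finset ℕ := range (ℓ + 1) \ δ.vertexIndices S

variable {δ} {S : Finset (Sym2 (Fin n))}

lemma vertexAt_coe (p : Fin (ℓ + 1)) : δ.vertexAt p = δ.1 p := by
  rw [vertexAt, show Fin.clamp (p : ℕ) ℓ = p from
    Fin.ext (by simp [Fin.clamp, Nat.lt_succ_iff.1 p.2])]

lemma vertexAt_inj {p q : ℕ} (hp : p ≤ ℓ) (hq : q ≤ ℓ)
    (h : δ.vertexAt p = δ.vertexAt q) : p = q := by
  simpa [Fin.ext_iff, Fin.clamp, hp, hq] using δ.2 h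

lemma edge_eq_edgeAt (k : Fin ℓ) : δ.edge k = δ.edgeAt k := by
  rw [edge, edgeAt, ← vertexAt_coe, ← vertexAt_coe]
  rfl

lemma mem_edgeFinset {e : Sym2 (Fin n)} : e ∈ edgeFinset δ ↔ ∃ k < ℓ, δ.edgeAt k = e := by
  simp only [edgeFinset, mem_image, mem_univ, true_and, edge_eq_edgeAt]
  exact ⟨fun ⟨k, hk⟩ => ⟨k, k.2, hk⟩, fun ⟨k, hk, he⟩ => ⟨⟨k, hk⟩, he⟩⟩

lemma edgeAt_inj {k k' : ℕ} (hk : k < ℓ) (hk' : k' < ℓ) (h : δ.edgeAt k = δ.edgeAt k') :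
    k = k' := by
  rcases Sym2.eq_iff.1 h with ⟨h₁, -⟩ | ⟨h₁, h₂⟩
  · exact vertexAt_inj (by omega) (by omega) h₁
  · have := vertexAt_inj (by omega) (by omega) h₁
    have := vertexAt_inj (by omega) (by omega) h₂
    omega

lemma posOf_le (v : Fin n) : δ.posOf v ≤ ℓ :=
  Nat.lt_succ_iff.1 (Function.invFun δ.1 v).2

lemma posOf_vertexAt {p : ℕ} (hp : p ≤ ℓ) : δ.posOf (δ.vertexAt p) = p := by
  have hp' : p < ℓ + 1 := Nat.lt_succ_iff.2 hp
  rw [posOf, show δ.vertexAt p = δ.1 ⟨p, hp'⟩ from vertexAt_coe ⟨p, hp'⟩,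
    Function.leftInverse_invFun δ.2]

lemma vertexAt_posOf_vertexAt (p : ℕ) :
    δ.vertexAt (δ.posOf (δ.vertexAt p)) = δ.vertexAt p := by
  rw [posOf, vertexAt_coe]
  exact Function.invFun_eq ⟨_, rfl⟩

lemma mem_edgeIndices {k : ℕ} : k ∈ δ.edgeIndices S ↔ k < ℓ ∧ δ.edgeAt k ∈ S := by
  simp [edgeIndices]

lemma le_of_mem_vertexIndices {p : ℕ} (hp : p ∈ δ.vertexIndices S) : p ≤ ℓ := by
  rcases mem_union.1 hp with hp | hp
  · exact (mem_edgeIndices.1 hp).1.le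
  · obtain ⟨k, hk, rfl⟩ := mem_image.1 hp
    exact (mem_edgeIndices.1 hk).1

lemma vertexIndices_subset_range : δ.vertexIndices S ⊆ range (ℓ + 1) :=
  fun _ hp => mem_range.2 (Nat.lt_succ_of_le (le_of_mem_vertexIndices hp))

lemma card_edgeIndices (hS : S ⊆ edgeFinset δ) : #(δ.edgeIndices S) = #S := by
  have himage : (δ.edgeIndices S).image δ.edgeAt = S := by
    ext e
    simp only [mem_image, mem_edgeIndices]
    refine ⟨fun ⟨_, ⟨_, hk⟩, he⟩ => he ▸ hk, fun he => ?_⟩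
    obtain ⟨k, hk, rfl⟩ := mem_edgeFinset.1 (hS he)
    exact ⟨k, ⟨hk, he⟩, rfl⟩
  conv_rhs => rw [← himage]
  refine (card_image_of_injOn fun k hk k' hk' h => ?_).symm
  exact edgeAt_inj (mem_edgeIndices.1 hk).1 (mem_edgeIndices.1 hk').1 h

lemma mem_vertexFinset {v : Fin n} : v ∈ vertexFinset S ↔ ∃ e ∈ S, v ∈ e := by
  simp [vertexFinset]

lemma vertexAt_mem_vertexFinset {p : ℕ} (hp : p ∈ δ.vertexIndices S) :
    δ.vertexAt p ∈ vertexFinset S := by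
  rw [mem_vertexFinset]
  rcases mem_union.1 hp with hp | hp
  · exact ⟨δ.edgeAt p, (mem_edgeIndices.1 hp).2, Sym2.mem_mk_left _ _⟩
  · obtain ⟨k, hk, rfl⟩ := mem_image.1 hp
    exact ⟨δ.edgeAt k, (mem_edgeIndices.1 hk).2, Sym2.mem_mk_right _ _⟩

lemma image_vertexIndices (hS : S ⊆ edgeFinset δ) :
    (δ.vertexIndices S).image δ.vertexAt = vertexFinset S := by
  refine Subset.antisymm (image_subset_iff.2 fun p hp => vertexAt_mem_vertexFinset hp) ?_
  intro v hv
  obtain ⟨e, he, hve⟩ := mem_vertexFinset.1 hv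
  obtain ⟨k, hk, rfl⟩ := mem_edgeFinset.1 (hS he)
  have hkI : k ∈ δ.edgeIndices S := mem_edgeIndices.2 ⟨hk, he⟩
  rcases Sym2.mem_iff.1 hve with rfl | rfl
  · exact mem_image_of_mem _ (mem_union_left _ hkI)
  · exact mem_image_of_mem _ (mem_union_right _ (mem_image_of_mem _ hkI))

lemma card_vertexIndices (hS : S ⊆ edgeFinset δ) :
    #(δ.vertexIndices S) = #S + #(runStarts (δ.edgeIndices S)) := by
  rw [vertexIndices, card_union_image_succ, card_edgeIndices hS]

lemma card_vertexFinset (hS : S ⊆ edgeFinset δ) :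
    #(vertexFinset S) = #S + #(runStarts (δ.edgeIndices S)) := by
  rw [← image_vertexIndices hS, card_image_of_injOn, card_vertexIndices hS]
  intro p hp q hq h
  exact vertexAt_inj (le_of_mem_vertexIndices hp) (le_of_mem_vertexIndices hq) h

lemma card_freeIndices (hS : S ⊆ edgeFinset δ) :
    #(δ.freeIndices S) = ℓ + 1 - (#S + #(runStarts (δ.edgeIndices S))) := by
  rw [freeIndices, card_sdiff_of_subset vertexIndices_subset_range, card_range,
    card_vertexIndices hS]

lemma vertexAt_notMem_vertexFinset (hS : S ⊆ edgeFinset δ) {p : ℕ}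
    (hp : p ∈ δ.freeIndices S) : δ.vertexAt p ∉ vertexFinset S := by
  rw [← image_vertexIndices hS]
  intro hmem
  obtain ⟨q, hq, hqp⟩ := mem_image.1 hmem
  obtain ⟨hp, hp'⟩ := mem_sdiff.1 hp
  rw [vertexAt_inj (le_of_mem_vertexIndices hq) (Nat.lt_succ_iff.1 (mem_range.1 hp)) hqp] at hq
  exact hp' hq

lemma theta_eq_card_runStarts (γ γ' : Path n ℓ) :
    theta γ γ' = #(runStarts (γ.edgeIndices (edgeFinset γ ∩ edgeFinset γ'))) := by
  classical
  rw [theta]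
  refine card_nbij (fun k => (k : ℕ)) ?_ (fun k _ k' _ h => Fin.ext h) ?_
  · intro k hk
    simp only [coe_filter, mem_univ, true_and, compStart, edge_eq_edgeAt] at hk
    dsimp only
    refine mem_sdiff.2 ⟨mem_edgeIndices.2 ⟨k.2, hk.1⟩, fun hk' => ?_⟩
    obtain ⟨a, ha, hak⟩ := mem_image.1 hk'
    rcases hk.2 with h | h
    · omega
    · exact h (by simpa [show (k : ℕ) - 1 = a by omega] using (mem_edgeIndices.1 ha).2)
  · intro s hs
    obtain ⟨hsI, hs'⟩ := mem_sdiff.1 hs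
    obtain ⟨hsl, hsS⟩ := mem_edgeIndices.1 hsI
    refine ⟨⟨s, hsl⟩, ?_, rfl⟩
    simp only [coe_filter, mem_univ, true_and, compStart, edge_eq_edgeAt]
    refine ⟨hsS, or_iff_not_imp_left.2 fun hs0 hprev => hs' (mem_image.2 ⟨s - 1, ?_, ?_⟩)⟩
    · exact mem_edgeIndices.2 ⟨by omega, hprev⟩
    · dsimp only at hs0
      omega

lemma card_runStarts_eq_theta (γ γ' : Path n ℓ) :
    #(runStarts (γ'.edgeIndices (edgeFinset γ ∩ edgeFinset γ'))) = theta γ γ' := by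
  have h := card_vertexFinset (δ := γ) (S := edgeFinset γ ∩ edgeFinset γ') inter_subset_left
  have h' := card_vertexFinset (δ := γ') (S := edgeFinset γ ∩ edgeFinset γ')
    inter_subset_right
  rw [theta_eq_card_runStarts]
  omega

noncomputable def relPos (γ γ' : Path n ℓ) (p : ℕ) : ℕ := γ.posOf (γ'.vertexAt p)

noncomputable def blockLow (γ γ' : Path n ℓ) (S : Finset (Sym2 (Fin n))) (s : ℕ) : ℕ :=
  min (relPos γ γ' s) (relPos γ γ' (s + runLen (γ'.edgeIndices S) s))

noncomputable def blockAscending (γ γ' : Path n ℓ) (S : Finset (Sym2 (Fin n))) (s : ℕ) :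
    Bool :=
  decide (relPos γ γ' s ≤ relPos γ γ' (s + runLen (γ'.edgeIndices S) s))

variable {γ γ' : Path n ℓ}

lemma vertexAt_relPos (hS : S ⊆ edgeFinset γ) {p : ℕ} (hp : p ∈ γ'.vertexIndices S) :
    γ.vertexAt (relPos γ γ' p) = γ'.vertexAt p := by
  obtain ⟨q, -, hq⟩ :=
    mem_image.1 ((image_vertexIndices hS).symm ▸ vertexAt_mem_vertexFinset hp)
  rw [relPos, ← hq, vertexAt_posOf_vertexAt]

lemma relPos_injOn (hS : S ⊆ edgeFinset γ) :
    Set.InjOn (relPos γ γ') (γ'.vertexIndices S) := by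
  intro p hp q hq h
  refine vertexAt_inj (δ := γ') (le_of_mem_vertexIndices hp) (le_of_mem_vertexIndices hq) ?_
  rw [← vertexAt_relPos hS hp, ← vertexAt_relPos hS hq, h]

lemma relPos_step (hS : S ⊆ edgeFinset γ) {k : ℕ} (hk : k ∈ γ'.edgeIndices S) :
    relPos γ γ' (k + 1) = relPos γ γ' k + 1 ∨
      relPos γ γ' k = relPos γ γ' (k + 1) + 1 := by
  obtain ⟨a, ha, hak⟩ := mem_edgeFinset.1 (hS (mem_edgeIndices.1 hk).2)
  rcases Sym2.eq_iff.1 hak with ⟨h₀, h₁⟩ | ⟨h₀, h₁⟩ <;>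
  · rw [relPos, relPos, ← h₀, ← h₁, posOf_vertexAt ha.le, posOf_vertexAt ha]
    omega

lemma relPos_add (hS : S ⊆ edgeFinset γ) {s : ℕ} (hs : s ∈ runStarts (γ'.edgeIndices S))
    {r : ℕ} (hr : r ≤ runLen (γ'.edgeIndices S) s) :
    relPos γ γ' (s + r) = if blockAscending γ γ' S s then blockLow γ γ' S s + r
      else blockLow γ γ' S s + (runLen (γ'.edgeIndices S) s - r) := by
  have hwalk := eq_add_or_add_eq_of_step (g := fun r => relPos γ γ' (s + r))
    (m := runLen (γ'.edgeIndices S) s)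
    (fun r hr => relPos_step hS (add_mem_of_lt_runLen hr))
    (fun r hr r' hr' h => by
      have hblock := runBlock_subset (I := γ'.edgeIndices S) hs
      have := relPos_injOn hS (hblock (mem_Icc.2 ⟨le_self_add, by simpa using hr⟩))
        (hblock (mem_Icc.2 ⟨le_self_add, by simpa using hr'⟩)) h
      omega)
  simp only [add_zero] at hwalk
  unfold blockAscending blockLow
  rcases hwalk with h | h <;>
  · have := h r hr
    have := h _ le_rfl
    split_ifs with hasc <;> simp at hasc <;> omega

lemma exists_relPos_eq (hS : S ⊆ edgeFinset γ) {s : ℕ}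
    (hs : s ∈ runStarts (γ'.edgeIndices S)) {x : ℕ}
    (hx : x ∈ Icc (blockLow γ γ' S s) (blockLow γ γ' S s + runLen (γ'.edgeIndices S) s)) :
    ∃ p ∈ runBlock (γ'.edgeIndices S) s, relPos γ γ' p = x := by
  rw [mem_Icc] at hx
  set r := if blockAscending γ γ' S s then x - blockLow γ γ' S s
    else runLen (γ'.edgeIndices S) s - (x - blockLow γ γ' S s)
  have hr : r ≤ runLen (γ'.edgeIndices S) s := by
    simp only [r]
    split_ifs <;> omega
  refine ⟨s + r, mem_Icc.2 ⟨le_self_add, by omega⟩, ?_⟩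
  rw [relPos_add hS hs hr]
  simp only [r]
  split_ifs <;> omega

lemma blockLow_add_runLen_le (hS : S ⊆ edgeFinset γ) {s : ℕ}
    (hs : s ∈ runStarts (γ'.edgeIndices S)) :
    blockLow γ γ' S s + runLen (γ'.edgeIndices S) s ≤ ℓ := by
  obtain ⟨p, -, hp⟩ := exists_relPos_eq hS hs (mem_Icc.2 ⟨le_self_add, le_rfl⟩)
  rw [← hp]
  exact posOf_le _

lemma disjointIntervals_blockLow (hS : S ⊆ edgeFinset γ) :
    DisjointIntervals (runStarts (γ'.edgeIndices S)) (blockLow γ γ' S)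
      (runLen (γ'.edgeIndices S)) := by
  intro s hs s' hs' hne
  refine disjoint_left.2 fun x hx hx' => ?_
  obtain ⟨p, hp, rfl⟩ := exists_relPos_eq hS hs hx
  obtain ⟨p', hp', hpp'⟩ := exists_relPos_eq hS hs' hx'
  rw [relPos_injOn hS (runBlock_subset hs' hp') (runBlock_subset hs hp) hpp'] at hp'
  exact disjoint_left.1 (disjoint_runBlock hs hs' hne) hp hp'

lemma vertexAt_eq_of_blocks_eq {γ₁ γ₂ : Path n ℓ} {S₁ S₂ : Finset (Sym2 (Fin n))}
    (hS₁ : S₁ ⊆ edgeFinset γ) (hS₂ : S₂ ⊆ edgeFinset γ)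
    (hI : γ₁.edgeIndices S₁ = γ₂.edgeIndices S₂)
    (hasc : ∀ s ∈ runStarts (γ₁.edgeIndices S₁),
      blockAscending γ γ₁ S₁ s = blockAscending γ γ₂ S₂ s)
    (hlow : ∀ s ∈ runStarts (γ₁.edgeIndices S₁),
      blockLow γ γ₁ S₁ s = blockLow γ γ₂ S₂ s)
    {p : ℕ} (hp : p ∈ γ₁.vertexIndices S₁) : γ₁.vertexAt p = γ₂.vertexAt p := by
  have hp₂ : p ∈ γ₂.vertexIndices S₂ := by rwa [vertexIndices, ← hI]
  obtain ⟨s, hs, hps⟩ := exists_mem_runBlock (I := γ₁.edgeIndices S₁) hp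
  have hs₂ : s ∈ runStarts (γ₂.edgeIndices S₂) := hI ▸ hs
  rw [runBlock, mem_Icc] at hps
  obtain ⟨r, rfl⟩ : ∃ r, p = s + r := ⟨p - s, by omega⟩
  have hr : r ≤ runLen (γ₁.edgeIndices S₁) s := by omega
  rw [← vertexAt_relPos hS₁ hp, ← vertexAt_relPos hS₂ hp₂, relPos_add hS₁ hs hr,
    relPos_add hS₂ hs₂ (hI ▸ hr), hasc s hs, hlow s hs, hI]

noncomputable def code (γ γ' : Path n ℓ) (S : Finset (Sym2 (Fin n))) (i j : ℕ) :
    Finset ℕ × (Fin i → Bool) × (Fin i → ℕ) × (Fin (ℓ + 1 - i - j) → ℕ) :=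
  (runBoundary (γ'.edgeIndices S),
    fun t => blockAscending γ γ' S (Nat.nth (· ∈ runStarts (γ'.edgeIndices S)) t),
    fun t => compress (runStarts (γ'.edgeIndices S)) (blockLow γ γ' S)
      (runLen (γ'.edgeIndices S)) (Nat.nth (· ∈ runStarts (γ'.edgeIndices S)) t),
    fun q => ((vertexFinset S)ᶜ.sort (· ≤ ·)).idxOf
      (γ'.vertexAt (Nat.nth (· ∈ γ'.freeIndices S) q)))

noncomputable def codeSpace (n ℓ i j : ℕ) :
    Finset (Finset ℕ × (Fin i → Bool) × (Fin i → ℕ) × (Fin (ℓ + 1 - i - j) → ℕ)) :=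
  (range (ℓ + 1)).powersetCard (2 * i) ×ˢ univ ×ˢ boundedInjections i (ℓ + 1 - j) ×ˢ
    boundedInjections (ℓ + 1 - i - j) (n - i - j)

lemma card_codeSpace (n ℓ i j : ℕ) :
    #(codeSpace n ℓ i j) = (ℓ + 1).choose (2 * i) * 2 ^ i * (ℓ + 1 - j).descFactorial i *
      (n - i - j).descFactorial (ℓ + 1 - i - j) := by
  simp [codeSpace, card_boundedInjections, mul_assoc]

lemma code_mem (hS : S ⊆ edgeFinset γ) (hS' : S ⊆ edgeFinset γ') {i j : ℕ}
    (hi : #(runStarts (γ'.edgeIndices S)) = i) (hj : #S = j) :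
    code γ γ' S i j ∈ codeSpace n ℓ i j := by
  have hdisj := disjointIntervals_blockLow (γ' := γ') hS
  have hstart (t : Fin i) : Nat.nth (· ∈ runStarts (γ'.edgeIndices S)) t ∈
      runStarts (γ'.edgeIndices S) := nth_mem_of_lt_card_finset (by rw [hi]; exact t.2)
  have hfree : #(γ'.freeIndices S) = ℓ + 1 - i - j := by
    rw [card_freeIndices hS', hi, hj]
    omega
  have hfree_mem (q : Fin (ℓ + 1 - i - j)) :
      Nat.nth (· ∈ γ'.freeIndices S) q ∈ γ'.freeIndices S :=
    nth_mem_of_lt_card_finset (by rw [hfree]; exact q.2)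
  have hsort (q : Fin (ℓ + 1 - i - j)) : γ'.vertexAt (Nat.nth (· ∈ γ'.freeIndices S) q) ∈
      (vertexFinset S)ᶜ.sort (· ≤ ·) :=
    (mem_sort _).2 (mem_compl.2 (vertexAt_notMem_vertexFinset hS' (hfree_mem q)))
  unfold code codeSpace
  refine mem_product.2 ⟨mem_powersetCard.2 ⟨?_, ?_⟩, mem_product.2 ⟨mem_univ _,
    mem_product.2 ⟨mem_boundedInjections ?_ ?_, mem_boundedInjections ?_ ?_⟩⟩⟩
  · exact (symmDiff_le_sup : runBoundary _ ≤ _).trans vertexIndices_subset_range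
  · rw [card_runBoundary, hi]
  · intro t t' h
    exact Fin.ext (nth_injOn_finset (by simp [hi]) (by simp [hi])
      (compress_injOn hdisj (hstart t) (hstart t') h))
  · intro t
    dsimp only
    have := compress_add_sum_le hdisj (fun s hs => blockLow_add_runLen_le hS hs) (hstart t)
    rw [sum_runLen, card_edgeIndices hS', hj] at this
    omega
  · intro q q' h
    have hv := (List.idxOf_inj (hsort q)).1 h
    have hp := vertexAt_inj
      (Nat.lt_succ_iff.1 (mem_range.1 (mem_sdiff.1 (hfree_mem q)).1))
      (Nat.lt_succ_iff.1 (mem_range.1 (mem_sdiff.1 (hfree_mem q')).1)) hv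
    exact Fin.ext (nth_injOn_finset (by simp [hfree]) (by simp [hfree]) hp)
  · intro q
    dsimp only
    have := List.idxOf_lt_length_iff.2 (hsort q)
    rw [length_sort, card_compl, Fintype.card_fin, card_vertexFinset hS', hi, hj] at this
    omega

lemma eq_of_code_eq {γ₁ γ₂ : Path n ℓ} {S₁ S₂ : Finset (Sym2 (Fin n))} {i j : ℕ}
    (hS₁ : S₁ ⊆ edgeFinset γ) (hS₁' : S₁ ⊆ edgeFinset γ₁)
    (hS₂ : S₂ ⊆ edgeFinset γ) (hS₂' : S₂ ⊆ edgeFinset γ₂)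
    (hi : #(runStarts (γ₁.edgeIndices S₁)) = i) (hj : #S₁ = j)
    (h : code γ γ₁ S₁ i j = code γ γ₂ S₂ i j) : γ₁ = γ₂ := by
  simp only [code, Prod.mk.injEq] at h
  obtain ⟨hK, hasc, hcomp, hfree⟩ := h
  have hI := runBoundary_injective hK
  have hP : γ₁.vertexIndices S₁ = γ₂.vertexIndices S₂ := by
    rw [vertexIndices, vertexIndices, hI]
  have hF : γ₁.freeIndices S₁ = γ₂.freeIndices S₂ := by rw [freeIndices, freeIndices, hP]
  rw [← hI] at hasc hcomp
  rw [← hF] at hfree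
  have hstart : ∀ s ∈ runStarts (γ₁.edgeIndices S₁),
      ∃ t : Fin i, Nat.nth (· ∈ runStarts (γ₁.edgeIndices S₁)) t = s := fun s hs => by
    obtain ⟨t, ht, rfl⟩ := exists_lt_card_nth_eq_finset hs
    exact ⟨⟨t, hi ▸ ht⟩, rfl⟩
  have hdisj₂ := disjointIntervals_blockLow (γ' := γ₂) hS₂
  rw [← hI] at hdisj₂
  have hlow (s : ℕ) (hs : s ∈ runStarts (γ₁.edgeIndices S₁)) :
      blockLow γ γ₁ S₁ s = blockLow γ γ₂ S₂ s := by
    refine eqOn_of_compress_eq (disjointIntervals_blockLow hS₁) hdisj₂ (fun s hs => ?_) hs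
    obtain ⟨t, rfl⟩ := hstart s hs
    exact congrFun hcomp t
  have hblock (p : ℕ) (hp : p ∈ γ₁.vertexIndices S₁) :
      γ₁.vertexAt p = γ₂.vertexAt p :=
    vertexAt_eq_of_blocks_eq hS₁ hS₂ hI
      (fun s hs => by obtain ⟨t, rfl⟩ := hstart s hs; exact congrFun hasc t) hlow hp
  have hV : vertexFinset S₁ = vertexFinset S₂ := by
    rw [← image_vertexIndices hS₁', ← image_vertexIndices hS₂', ← hP]
    exact image_congr hblock
  have hrest (p : ℕ) (hp : p ∈ γ₁.freeIndices S₁) :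
      γ₁.vertexAt p = γ₂.vertexAt p := by
    obtain ⟨q, hq, rfl⟩ := exists_lt_card_nth_eq_finset hp
    rw [card_freeIndices hS₁', hi, hj] at hq
    have hq' := congrFun hfree ⟨q, by omega⟩
    dsimp only at hq'
    rw [hV] at hq'
    refine (List.idxOf_inj ((mem_sort _).2 (mem_compl.2 ?_))).1 hq'
    exact hV ▸ vertexAt_notMem_vertexFinset hS₁' hp
  refine Subtype.ext (funext fun p => ?_)
  rw [← vertexAt_coe, ← vertexAt_coe]
  by_cases hp : (p : ℕ) ∈ γ₁.vertexIndices S₁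
  · exact hblock p hp
  · exact hrest p (mem_sdiff.2 ⟨mem_range.2 p.2, hp⟩)

lemma mem_Aset {γ γ' : Path n ℓ} {i j : ℕ} :
    γ' ∈ Aset γ i j ↔ theta γ γ' = i ∧ #(edgeFinset γ ∩ edgeFinset γ') = j := by
  simp [Aset]

variable (γ) (i j : ℕ)

lemma mapsTo_code : Set.MapsTo (fun γ' => code γ γ' (edgeFinset γ ∩ edgeFinset γ') i j)
    (Aset γ i j) (codeSpace n ℓ i j) := fun γ' hγ' => by
  obtain ⟨hθ, hj⟩ := mem_Aset.1 hγ'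
  exact code_mem inter_subset_left inter_subset_right
    (by rw [card_runStarts_eq_theta, hθ]) hj

lemma injOn_code : Set.InjOn (fun γ' => code γ γ' (edgeFinset γ ∩ edgeFinset γ') i j)
    (Aset γ i j) := fun γ₁ h₁ γ₂ _ h => by
  obtain ⟨hθ, hj⟩ := mem_Aset.1 h₁
  exact eq_of_code_eq inter_subset_left inter_subset_right inter_subset_left
    inter_subset_right (by rw [card_runStarts_eq_theta, hθ]) hj h

end Path

theorem counting_general (n ℓ : ℕ) (γ : Path n ℓ) (i j : ℕ) :
    (Aset γ i j).card ≤
      Nat.choose (ℓ + 1) (2 * i) * Nat.choose (n - i - j) (ℓ + 1 - i - j) *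
        2 ^ i * Nat.factorial (ℓ + 1 - j) := by
  calc (Aset γ i j).card ≤ #(Path.codeSpace n ℓ i j) :=
        card_le_card_of_injOn _ (Path.mapsTo_code γ i j) (Path.injOn_code γ i j)
    _ = (ℓ + 1).choose (2 * i) * 2 ^ i *
          ((ℓ + 1 - j).descFactorial i * (n - i - j).descFactorial (ℓ + 1 - j - i)) := by
      rw [Path.card_codeSpace, Nat.sub_right_comm (ℓ + 1) i j]
      ring
    _ ≤ (ℓ + 1).choose (2 * i) * 2 ^ i *
          ((n - i - j).choose (ℓ + 1 - j - i) * (ℓ + 1 - j).factorial) :=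
      Nat.mul_le_mul_left _ (descFactorial_mul_descFactorial_le _ _ _)
    _ = _ := by
      rw [Nat.sub_right_comm (ℓ + 1) j i]
      ring

/-- Lemma 2.9 (counting): for γ of length 1 ≤ ℓ ≤ n - 1 and 0 ≤ i ≤ j ≤ ℓ,
|A_{i,j}(γ)| ≤ C(ℓ+1, 2i) · C(n-i-j, ℓ+1-i-j) · 2^i · (ℓ+1-j)!. -/
theorem counting (n ℓ : ℕ) (hn : 2 ≤ n) (hℓ1 : 1 ≤ ℓ) (hℓ : ℓ ≤ n - 1)
    (γ : Path n ℓ) (i j : ℕ) (hij : i ≤ j) (hjℓ : j ≤ ℓ) :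
    (Aset γ i j).card ≤
      Nat.choose (ℓ + 1) (2 * i) * Nat.choose (n - i - j) (ℓ + 1 - i - j) *
        2 ^ i * Nat.factorial (ℓ + 1 - j) :=
  counting_general n ℓ γ i j

end Paper
end

section
/- Let n ≥ 3 and ℓ ≥ 1 be integers, and let Z be the sum of ℓ i.i.d. exponential random variables with mean n. Then P( Z ≤ ℓ/e − log n ) ≤ n^{−ℓ−e}, where e denotes Euler's number (the inequality is trivially true when ℓ/e − log n ≤ 0, since then the probability is 0). -/
/-!
On `[0, t]` the Gamma density with shape `a` and rate `r` is at most `r^a x^(a-1) / Γ(a)`, so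
`P(Z ≤ t) ≤ r^a t^a / Γ(a + 1)`. For `a = ℓ`, `r = 1/n` and `t = ℓ/e - log n` it remains to bound
`t^ℓ`: from `1 - y ≤ e^{-y}` we get `t ≤ (ℓ/e) n^{-e/ℓ}`, and `(ℓ/e)^ℓ ≤ ℓ!` because `ℓ^ℓ/ℓ!` is
one term of the series of `e^ℓ`.
-/

open MeasureTheory ProbabilityTheory

namespace Paper

open Real Set
open scoped Nat

lemma sub_le_mul_exp_neg_div {c : ℝ} (hc : 0 < c) (y : ℝ) : c - y ≤ c * exp (-(y / c)) := by
  calc c - y = c * (-(y / c) + 1) := by field_simp; ring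
    _ ≤ c * exp (-(y / c)) := by gcongr; exact add_one_le_exp _

lemma sub_pow_le_pow_mul_exp {c y : ℝ} (hc : 0 < c) (hy : y ≤ c) (ℓ : ℕ) :
    (c - y) ^ ℓ ≤ c ^ ℓ * exp (-(ℓ * y / c)) := by
  calc (c - y) ^ ℓ ≤ (c * exp (-(y / c))) ^ ℓ :=
        pow_le_pow_left₀ (sub_nonneg.2 hy) (sub_le_mul_exp_neg_div hc y) ℓ
    _ = c ^ ℓ * exp (-(ℓ * y / c)) := by rw [mul_pow, ← exp_nat_mul]; ring_nf

lemma div_exp_one_pow_le_factorial (ℓ : ℕ) : ((ℓ : ℝ) / exp 1) ^ ℓ ≤ ℓ ! := by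
  have h := pow_div_factorial_le_exp (ℓ : ℝ) (Nat.cast_nonneg ℓ) ℓ
  rw [div_le_iff₀ (by positivity)] at h
  rw [div_pow, exp_one_pow, div_le_iff₀ (by positivity)]
  linarith

lemma div_exp_one_sub_pow_le {ℓ : ℕ} (hℓ : ℓ ≠ 0) {y : ℝ} (hy : y ≤ ℓ / exp 1) :
    ((ℓ : ℝ) / exp 1 - y) ^ ℓ ≤ ℓ ! * exp (-(exp 1 * y)) := by
  have hc : 0 < (ℓ : ℝ) / exp 1 := by positivity
  calc ((ℓ : ℝ) / exp 1 - y) ^ ℓ ≤ ((ℓ : ℝ) / exp 1) ^ ℓ * exp (-(ℓ * y / (ℓ / exp 1))) :=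
        sub_pow_le_pow_mul_exp hc hy ℓ
    _ = ((ℓ : ℝ) / exp 1) ^ ℓ * exp (-(exp 1 * y)) := by field_simp
    _ ≤ ℓ ! * exp (-(exp 1 * y)) := by gcongr; exact div_exp_one_pow_le_factorial ℓ

lemma gammaMeasure_Iic_le {a r t : ℝ} (ha : 0 < a) (hr : 0 ≤ r) (ht : 0 ≤ t) :
    gammaMeasure a r (Iic t) ≤ ENNReal.ofReal (r ^ a * t ^ a / Gamma (a + 1)) := by
  set c := r ^ a / Gamma a
  have hpdf : ∀ x ∈ Icc 0 t, gammaPDF a r x ≤ ENNReal.ofReal (c * x ^ (a - 1)) := by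
    intro x hx
    rw [gammaPDF_of_nonneg hx.1]
    refine ENNReal.ofReal_le_ofReal (mul_le_of_le_one_right ?_ ?_)
    · have := rpow_nonneg hx.1 (a - 1); positivity
    · rw [exp_le_one_iff, neg_nonpos]; exact mul_nonneg hr hx.1
  have hint : ∫ x in Icc 0 t, c * x ^ (a - 1) = r ^ a * t ^ a / Gamma (a + 1) := by
    rw [integral_Icc_eq_integral_Ioc, ← intervalIntegral.integral_of_le ht,
      intervalIntegral.integral_const_mul, integral_rpow (Or.inl (by linarith)),
      sub_add_cancel, zero_rpow ha.ne', Gamma_add_one ha.ne', sub_zero]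
    simp only [c]
    field_simp
  rw [gammaMeasure, withDensity_apply _ measurableSet_Iic,
    lintegral_Iic_eq_lintegral_Iio_add_Icc _ ht, lintegral_gammaPDF_of_nonpos le_rfl, zero_add,
    ← hint, ofReal_integral_eq_lintegral_ofReal]
  · exact setLIntegral_mono' measurableSet_Icc hpdf
  · show IntegrableOn _ _ _
    rw [integrableOn_Icc_iff_integrableOn_Ioc, ← intervalIntegrable_iff_integrableOn_Ioc_of_le ht]
    exact (intervalIntegral.intervalIntegrable_rpow' (by linarith)).const_mul c
  · filter_upwards [ae_restrict_mem measurableSet_Icc] with x hx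
    have := rpow_nonneg hx.1 (a - 1); positivity

lemma gammaMeasure_Iic_of_nonpos {a r t : ℝ} (ha : 0 < a) (hr : 0 ≤ r) (ht : t ≤ 0) :
    gammaMeasure a r (Iic t) = 0 := by
  refine le_antisymm ((measure_mono (Iic_subset_Iic.2 ht)).trans ?_) zero_le
  simpa [zero_rpow ha.ne'] using gammaMeasure_Iic_le ha hr le_rfl

/-- The tail estimate used in Lemma 2.1: if `Z` is the sum of `ℓ ≥ 1` i.i.d. exponential
variables of mean `n` (i.e. `Z` has the Gamma distribution with shape `ℓ` and scale `n`,
that is, rate `1/n`), and `n ≥ 3`, then `P(Z ≤ ℓ/e - log n) ≤ n^{-ℓ-e}`. -/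
theorem gamma_lower_tail (n ℓ : ℕ) (hn : 3 ≤ n) (hℓ : 1 ≤ ℓ) :
    gammaMeasure (ℓ : ℝ) ((n : ℝ)⁻¹)
        (Set.Iic ((ℓ : ℝ) / Real.exp 1 - Real.log n)) ≤
      ENNReal.ofReal ((n : ℝ) ^ (-(ℓ : ℝ) - Real.exp 1)) := by
  have hn0 : (0 : ℝ) < n := Nat.cast_pos.2 (by omega)
  set t := (ℓ : ℝ) / exp 1 - log n
  rcases le_total t 0 with ht | ht
  · rw [gammaMeasure_Iic_of_nonpos (by positivity) (by positivity) ht]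
    exact zero_le
  have htail : t ^ ℓ ≤ ℓ ! * (n : ℝ) ^ (-exp 1) := by
    rw [rpow_def_of_pos hn0, mul_neg, mul_comm (log _)]
    simpa using div_exp_one_sub_pow_le (by omega) (sub_nonneg.1 ht)
  refine (gammaMeasure_Iic_le (by positivity) (by positivity) ht).trans
    (ENNReal.ofReal_le_ofReal ?_)
  rw [rpow_natCast, rpow_natCast, inv_pow, Gamma_nat_eq_factorial, sub_eq_add_neg, rpow_add hn0,
    rpow_neg hn0.le, rpow_natCast]
  calc ((n : ℝ) ^ ℓ)⁻¹ * t ^ ℓ / ℓ ! ≤ ((n : ℝ) ^ ℓ)⁻¹ * (ℓ ! * (n : ℝ) ^ (-exp 1)) / ℓ ! := by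
        gcongr
    _ = ((n : ℝ) ^ ℓ)⁻¹ * (n : ℝ) ^ (-exp 1) := by field_simp

end Paper
end
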